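/- arXiv:2408.16577 — 5 statements merged into one kernel-verified Lean document; each statement's English description precedes it below -/
import Mathlib

section
/- If μ(B \ A) = 0 (monotonicity of the outcome in the cause), then μ(A ∩ Bᶜ) = μ(A) − μ(B). That is, under monotonicity the counterfactual probability of necessity and sufficiency PNS(z, z̄) = P(Y_{do(Z=z)}=y ∧ Y_{do(Z=z̄)}≠y) equals P(Y_{do(Z=z)}=y) − P(Y_{do(Z=z̄)}=y). -/
open MeasureTheory

/-- Under monotonicity (`μ (B \ A) = 0`), the counterfactual PNS
`μ (A ∩ Bᶜ)` equals `μ A - μ B`. -/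
theorem pns_eq_sub_of_monotonicity {Ω : Type*} [MeasurableSpace Ω]
    (μ : Measure Ω) [IsProbabilityMeasure μ] (A B : Set Ω)
    (hA : MeasurableSet A) (hB : MeasurableSet B)
    (hmono : μ (B \ A) = 0) :
    μ (A ∩ Bᶜ) = μ A - μ B := by
  have hB' : μ B = μ (A ∩ B) := by
    have : B = (A ∩ B) ∪ (B \ A) := by
      ext x; simp [Set.mem_diff]; tauto
    nth_rewrite 1 [this]
    refine le_antisymm ?_ (measure_mono Set.subset_union_left)
    calc μ ((A ∩ B) ∪ (B \ A)) ≤ μ (A ∩ B) + μ (B \ A) := measure_union_le _ _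
      _ = μ (A ∩ B) := by simp [hmono]
  have h1 : A ∩ Bᶜ = A \ (A ∩ B) := by
    ext x; simp [Set.mem_diff]
  rw [h1, measure_diff Set.inter_subset_left (hA.inter hB).nullMeasurableSet
    (measure_ne_top μ _), hB']
end

section
/- Suppose C and D partition Ω (C ∩ D = ∅ and C ∪ D = Ω), consistency holds (C ∩ E = C ∩ A and D ∩ E = D ∩ B), and μ(D ∩ Eᶜ) > 0 and μ(C ∩ E) > 0. Then the observational PNS expression of Definition 1 equals the counterfactual PNS: μ[A | D ∩ Eᶜ]·μ(D ∩ Eᶜ) + μ[Bᶜ | C ∩ E]·μ(C ∩ E) = μ(A ∩ Bᶜ). -/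
open MeasureTheory

theorem Set.inter_compl_eq_of_inter_eq {α : Type*} {s t u : Set α} (h : s ∩ t = s ∩ u) :
    s ∩ tᶜ = s ∩ uᶜ := by
  rw [← Set.sdiff_eq, ← Set.sdiff_self_inter, h, Set.sdiff_self_inter, Set.sdiff_eq]

-- When `μ t = 0`, both sides vanish: `0 / 0 * 0 = 0` in `ℝ≥0∞`.
theorem MeasureTheory.measure_inter_div_mul_cancel {Ω : Type*} [MeasurableSpace Ω]
    (μ : Measure Ω) [IsFiniteMeasure μ] (s t : Set Ω) :
    μ (s ∩ t) / μ t * μ t = μ (s ∩ t) := by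
  by_cases ht : μ t = 0
  · simp [ht, measure_mono_null Set.inter_subset_right ht]
  · exact ENNReal.div_mul_cancel ht (measure_ne_top μ t)

theorem observational_pns_eq_counterfactual_pns_general {Ω : Type*} [MeasurableSpace Ω]
    (μ : Measure Ω) [IsProbabilityMeasure μ] (A B C D E : Set Ω)
    (hC : MeasurableSet C)
    (hCD : C ∩ D = ∅) (hCDunion : C ∪ D = Set.univ)
    (hconsC : C ∩ E = C ∩ A) (hconsD : D ∩ E = D ∩ B) :
    (μ (A ∩ (D ∩ Eᶜ)) / μ (D ∩ Eᶜ)) * μ (D ∩ Eᶜ)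
      + (μ (Bᶜ ∩ (C ∩ E)) / μ (C ∩ E)) * μ (C ∩ E)
      = μ (A ∩ Bᶜ) := by
  obtain rfl : Cᶜ = D := (IsCompl.of_eq hCD hCDunion).compl_eq
  -- Consistency turns the two terms into the parts of `A ∩ Bᶜ` outside and inside `C`.
  rw [measure_inter_div_mul_cancel, measure_inter_div_mul_cancel,
    Set.inter_compl_eq_of_inter_eq hconsD, hconsC, ← measure_sdiff_add_inter (A ∩ Bᶜ) hC,
    Set.sdiff_eq]
  congr 2 <;> ac_rfl

/-- Under consistency and the partition of the population into `C = {Z = z}`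
and `D = {Z = z̄}`, the observational PNS expression of Definition 1 equals the
counterfactual PNS `μ (A ∩ Bᶜ)`. -/
theorem observational_pns_eq_counterfactual_pns {Ω : Type*} [MeasurableSpace Ω]
    (μ : Measure Ω) [IsProbabilityMeasure μ] (A B C D E : Set Ω)
    (hA : MeasurableSet A) (hB : MeasurableSet B) (hC : MeasurableSet C)
    (hD : MeasurableSet D) (hE : MeasurableSet E)
    (hCD : C ∩ D = ∅) (hCDunion : C ∪ D = Set.univ)
    (hconsC : C ∩ E = C ∩ A) (hconsD : D ∩ E = D ∩ B)
    (hDpos : 0 < μ (D ∩ Eᶜ)) (hCpos : 0 < μ (C ∩ E)) :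
    (μ (A ∩ (D ∩ Eᶜ)) / μ (D ∩ Eᶜ)) * μ (D ∩ Eᶜ)
      + (μ (Bᶜ ∩ (C ∩ E)) / μ (C ∩ E)) * μ (C ∩ E)
      = μ (A ∩ Bᶜ) :=
  observational_pns_eq_counterfactual_pns_general μ A B C D E hC hCD hCDunion hconsC hconsD
end

section
/- Suppose C and D partition Ω (C ∩ D = ∅ and C ∪ D = Ω), consistency holds (C ∩ E = C ∩ A and D ∩ E = D ∩ B), μ(D ∩ Eᶜ) > 0, μ(C ∩ E) > 0, and μ(B \ A) = 0 (monotonicity). Then the observational PNS expression of Definition 1 equals the difference of intervention probabilities: μ[A | D ∩ Eᶜ]·μ(D ∩ Eᶜ) + μ[Bᶜ | C ∩ E]·μ(C ∩ E) = μ(A) − μ(B). This is Lemma 1 of the paper: if Y is monotonic relative to Z, then PNS(z, z̄) = P(Y_{do(Z=z)}=y) − P(Y_{do(Z=z̄)}=y). -/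
open MeasureTheory

/-- Lemma 1 of the paper: under consistency, the partition into `C` and `D`,
and monotonicity (`μ (B \ A) = 0`), the observational PNS expression of
Definition 1 equals the difference of intervention probabilities `μ A - μ B`. -/
theorem observational_pns_eq_intervention_diff {Ω : Type*} [MeasurableSpace Ω]
    (μ : Measure Ω) [IsProbabilityMeasure μ] (A B C D E : Set Ω)
    (hA : MeasurableSet A) (hB : MeasurableSet B) (hC : MeasurableSet C)
    (hD : MeasurableSet D) (hE : MeasurableSet E)
    (hCD : C ∩ D = ∅) (hCDunion : C ∪ D = Set.univ)
    (hconsC : C ∩ E = C ∩ A) (hconsD : D ∩ E = D ∩ B)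
    (hDpos : 0 < μ (D ∩ Eᶜ)) (hCpos : 0 < μ (C ∩ E))
    (hmono : μ (B \ A) = 0) :
    (μ (A ∩ (D ∩ Eᶜ)) / μ (D ∩ Eᶜ)) * μ (D ∩ Eᶜ)
      + (μ (Bᶜ ∩ (C ∩ E)) / μ (C ∩ E)) * μ (C ∩ E)
      = μ A - μ B := by
  rw [ENNReal.div_mul_cancel hDpos.ne' (measure_ne_top μ _),
      ENNReal.div_mul_cancel hCpos.ne' (measure_ne_top μ _)]
  have h1 : A ∩ (D ∩ Eᶜ) = (A ∩ Bᶜ) ∩ D := by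
    ext x; have := Set.ext_iff.mp hconsD x
    simp only [Set.mem_inter_iff, Set.mem_compl_iff] at this ⊢; tauto
  have h2 : Bᶜ ∩ (C ∩ E) = (A ∩ Bᶜ) ∩ C := by
    ext x; have := Set.ext_iff.mp hconsC x
    simp only [Set.mem_inter_iff, Set.mem_compl_iff] at this ⊢; tauto
  rw [h1, h2]
  have hdisj : Disjoint ((A ∩ Bᶜ) ∩ D) ((A ∩ Bᶜ) ∩ C) := by
    rw [Set.disjoint_iff]
    intro x hx
    have : x ∈ C ∩ D := ⟨hx.2.2, hx.1.2⟩
    rw [hCD] at this; exact this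
  have hunion : ((A ∩ Bᶜ) ∩ D) ∪ ((A ∩ Bᶜ) ∩ C) = A ∩ Bᶜ := by
    rw [← Set.inter_union_distrib_left, Set.union_comm, hCDunion, Set.inter_univ]
  have hsum : μ ((A ∩ Bᶜ) ∩ D) + μ ((A ∩ Bᶜ) ∩ C) = μ (A ∩ Bᶜ) := by
    rw [← measure_union hdisj ((hA.inter hB.compl).inter hC), hunion]
  rw [hsum]
  have hAB : μ (A ∩ B) = μ B := by
    have : μ (B ∩ A) + μ (B \ A) = μ B := measure_inter_add_diff B hA
    rw [hmono, add_zero, Set.inter_comm] at this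
    exact this
  have hsplit : μ (A ∩ B) + μ (A \ B) = μ A := measure_inter_add_diff A hB
  rw [hAB] at hsplit
  have : A ∩ Bᶜ = A \ B := rfl
  rw [this, ← hsplit, ENNReal.add_sub_cancel_left (measure_ne_top μ B)]
end

section
/- Suppose C and D partition Ω (C ∩ D = ∅ and C ∪ D = Ω), consistency holds (C ∩ E = C ∩ A and D ∩ E = D ∩ B), μ(D ∩ Eᶜ) > 0, μ(C ∩ E) > 0, μ(B \ A) = 0 (monotonicity), and exogeneity holds: μ(A) = μ[E | C] and μ(B) = μ[E | D]. Then the observational PNS expression of Definition 1 equals the difference of conditional probabilities: μ[A | D ∩ Eᶜ]·μ(D ∩ Eᶜ) + μ[Bᶜ | C ∩ E]·μ(C ∩ E) = μ[E | C] − μ[E | D]. This is Lemma 2 of the paper: if Z is exogenous relative to Y and Y is monotonic relative to Z, then PNS(z, z̄) = P(Y=y | Z=z) − P(Y=y | Z=z̄). -/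
open MeasureTheory

/-- Lemma 2 of the paper: under consistency, the partition into `C` and `D`,
monotonicity (`μ (B \ A) = 0`), and exogeneity
(`μ A = μ[E | C]` and `μ B = μ[E | D]`), the observational PNS expression of
Definition 1 equals the difference of conditional probabilities
`μ[E | C] - μ[E | D]`. -/
theorem observational_pns_eq_conditional_diff {Ω : Type*} [MeasurableSpace Ω]
    (μ : Measure Ω) [IsProbabilityMeasure μ] (A B C D E : Set Ω)
    (hA : MeasurableSet A) (hB : MeasurableSet B) (hC : MeasurableSet C)
    (hD : MeasurableSet D) (hE : MeasurableSet E)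
    (hCD : C ∩ D = ∅) (hCDunion : C ∪ D = Set.univ)
    (hconsC : C ∩ E = C ∩ A) (hconsD : D ∩ E = D ∩ B)
    (hDpos : 0 < μ (D ∩ Eᶜ)) (hCpos : 0 < μ (C ∩ E))
    (hmono : μ (B \ A) = 0)
    (hexoA : μ A = μ (E ∩ C) / μ C) (hexoB : μ B = μ (E ∩ D) / μ D) :
    (μ (A ∩ (D ∩ Eᶜ)) / μ (D ∩ Eᶜ)) * μ (D ∩ Eᶜ)
      + (μ (Bᶜ ∩ (C ∩ E)) / μ (C ∩ E)) * μ (C ∩ E)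
      = μ (E ∩ C) / μ C - μ (E ∩ D) / μ D := by
  have h1 : μ (A ∩ (D ∩ Eᶜ)) / μ (D ∩ Eᶜ) * μ (D ∩ Eᶜ) = μ (A ∩ (D ∩ Eᶜ)) :=
    ENNReal.div_mul_cancel hDpos.ne' (measure_ne_top μ _)
  have h2 : μ (Bᶜ ∩ (C ∩ E)) / μ (C ∩ E) * μ (C ∩ E) = μ (Bᶜ ∩ (C ∩ E)) :=
    ENNReal.div_mul_cancel hCpos.ne' (measure_ne_top μ _)
  rw [h1, h2, ← hexoA, ← hexoB]
  -- set identities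
  have hset1 : A ∩ (D ∩ Eᶜ) = (A \ B) ∩ D := by
    ext x
    have : x ∈ D → (x ∈ E ↔ x ∈ B) := by
      intro hx
      constructor
      · intro he; have : x ∈ D ∩ B := hconsD ▸ ⟨hx, he⟩; exact this.2
      · intro hb; have : x ∈ D ∩ E := hconsD ▸ ⟨hx, hb⟩; exact this.2
    simp only [Set.mem_inter_iff, Set.mem_diff, Set.mem_compl_iff]
    constructor
    · rintro ⟨ha, hd, he⟩; exact ⟨⟨ha, fun hb => he ((this hd).mpr hb)⟩, hd⟩
    · rintro ⟨⟨ha, hb⟩, hd⟩; exact ⟨ha, hd, fun he => hb ((this hd).mp he)⟩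
  have hset2 : Bᶜ ∩ (C ∩ E) = (A \ B) ∩ C := by
    ext x
    have : x ∈ C → (x ∈ E ↔ x ∈ A) := by
      intro hx
      constructor
      · intro he; have : x ∈ C ∩ A := hconsC ▸ ⟨hx, he⟩; exact this.2
      · intro ha; have : x ∈ C ∩ E := hconsC ▸ ⟨hx, ha⟩; exact this.2
    simp only [Set.mem_inter_iff, Set.mem_diff, Set.mem_compl_iff]
    constructor
    · rintro ⟨hb, hc, he⟩; exact ⟨⟨(this hc).mp he, hb⟩, hc⟩
    · rintro ⟨⟨ha, hb⟩, hc⟩; exact ⟨hb, hc, (this hc).mpr ha⟩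
  rw [hset1, hset2]
  have hsum : μ ((A \ B) ∩ D) + μ ((A \ B) ∩ C) = μ (A \ B) := by
    rw [← measure_union (by
        rw [Set.disjoint_iff_inter_eq_empty]
        rw [show (A \ B) ∩ D ∩ ((A \ B) ∩ C) = (A \ B) ∩ (C ∩ D) by
          ext x; simp only [Set.mem_inter_iff]; tauto]
        rw [hCD, Set.inter_empty])
      ((hA.diff hB).inter hC)]
    congr 1
    rw [← Set.inter_union_distrib_left, Set.union_comm, hCDunion, Set.inter_univ]
  rw [hsum]
  -- μ (A \ B) = μ A - μ B
  have hBA : μ (A ∩ B) + μ (A \ B) = μ A := measure_inter_add_diff A hB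
  have hB' : μ B = μ (A ∩ B) := by
    have := measure_inter_add_diff (μ := μ) B hA
    rw [hmono, add_zero] at this
    rw [← this, Set.inter_comm]
  rw [hB']
  exact ENNReal.eq_sub_of_add_eq (measure_ne_top μ _) (by rw [add_comm]; exact hBA)
end

section
/- Suppose μ(C) > 0, μ(D) > 0, μ(B \ A) = 0 (monotonicity), and exogeneity holds: μ(A) = μ[E | C] and μ(B) = μ[E | D]. Then the counterfactual PNS equals the difference of observational conditional probabilities: μ(A ∩ Bᶜ) = μ[E | C] − μ[E | D]. This is Equation (1) of the paper for the modality-invariant variable: under exogeneity and monotonicity, PNS_I(z, z̄) = P(Y=y | Z_I=z) − P(Y=y | Z_I=z̄). -/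
open MeasureTheory

/-- Equation (1) of the paper for the modality-invariant variable: under
exogeneity (`μ A = μ[E | C]`, `μ B = μ[E | D]`) and monotonicity
(`μ (B \ A) = 0`), the counterfactual PNS `μ (A ∩ Bᶜ)` equals
`μ[E | C] - μ[E | D]`. -/
theorem counterfactual_pns_eq_conditional_diff {Ω : Type*} [MeasurableSpace Ω]
    (μ : Measure Ω) [IsProbabilityMeasure μ] (A B C D E : Set Ω)
    (hA : MeasurableSet A) (hB : MeasurableSet B) (hC : MeasurableSet C)
    (hD : MeasurableSet D) (hE : MeasurableSet E)
    (hCpos : 0 < μ C) (hDpos : 0 < μ D)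
    (hmono : μ (B \ A) = 0)
    (hexoA : μ A = μ (E ∩ C) / μ C) (hexoB : μ B = μ (E ∩ D) / μ D) :
    μ (A ∩ Bᶜ) = μ (E ∩ C) / μ C - μ (E ∩ D) / μ D := by
  have hBA : μ B = μ (A ∩ B) := by
    have := measure_inter_add_diff (μ := μ) B hA
    rw [hmono, add_zero] at this
    rw [← this, Set.inter_comm]
  have hsplit : μ (A ∩ B) + μ (A ∩ Bᶜ) = μ A := by
    have := measure_inter_add_diff (μ := μ) A hB
    simpa [Set.diff_eq] using this
  have hfin : μ (A ∩ B) ≠ ⊤ := (measure_lt_top μ _).ne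
  have : μ (A ∩ Bᶜ) = μ A - μ B := by
    rw [hBA, ← hsplit]
    rw [ENNReal.add_sub_cancel_left hfin]
  rw [this, hexoA, hexoB]
end
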